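/- Let m, n ≥ 1 and let G be the two-star graph with vertex set {x₁, …, x_m} ∪ {a, b} ∪ {y₁, …, y_n}, whose edges are x_i–a for all i, a–b, and b–y_j for all j (so G is a two-star graph that is not a star graph). Then there is no Boolean semigroup S (commutative semigroup with zero in which x·x = x for all x) such that Γ(S) is isomorphic to G. -/

import Mathlib

universe u v w
/-- A commutative semigroup with a zero element `0` satisfying `0 * a = 0`. -/
class CommSemigroupWithZero (S : Type u) extends CommSemigroup S, Zero S where
  zero_mul' : ∀ a : S, 0 * a = 0

/-- The zero-divisor graph of `S`, as a simple graph on all of `S`: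
distinct nonzero `x, y` are adjacent iff `x * y = 0`.  (The element `0` and the
non-zero-divisors are isolated vertices, so adjacency, end vertices and cycles
are exactly those of `Γ(S)`.) -/
def zdGraph (S : Type u) [CommSemigroupWithZero S] : SimpleGraph S where
  Adj x y := x ≠ y ∧ x * y = 0 ∧ x ≠ 0 ∧ y ≠ 0
  symm := by
    constructor
    rintro x y ⟨h1, h2, h3, h4⟩
    exact ⟨h1.symm, by rwa [mul_comm], h4, h3⟩
  loopless := ⟨fun x h => h.1 rfl⟩

/-- `x` is a vertex of `Γ(S)`: a nonzero zero-divisor. -/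
def IsVertex (S : Type u) [CommSemigroupWithZero S] (x : S) : Prop :=
  x ≠ 0 ∧ ∃ y : S, y ≠ 0 ∧ x * y = 0

/-- `x` is an end vertex of `Γ(S)`: it has exactly one neighbour. -/
def IsEndVertex (S : Type u) [CommSemigroupWithZero S] (x : S) : Prop :=
  ∃! y : S, (zdGraph S).Adj x y
/-- The zero-divisor graph of `S` on its vertex set (the nonzero zero-divisors). -/
def zdvGraph (S : Type u) [CommSemigroupWithZero S] :
    SimpleGraph {x : S // x ≠ 0 ∧ ∃ y : S, y ≠ 0 ∧ x * y = 0} where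
  Adj a b := a ≠ b ∧ (a : S) * (b : S) = 0
  symm := by
    constructor
    rintro a b ⟨h1, h2⟩
    exact ⟨h1.symm, by rwa [mul_comm]⟩
  loopless := ⟨fun a h => h.1 rfl⟩

/-- `G` is (isomorphic to) the zero-divisor graph of some commutative semigroup with zero. -/
def IsZDGraphOf {α : Type v} (G : SimpleGraph α) : Prop :=
  ∃ (S : Type u) (inst : CommSemigroupWithZero S), Nonempty ((@zdvGraph S inst) ≃g G)

/-- The two-star graph: centres `a = Sum.inr (Sum.inl 0)` and `b = Sum.inr (Sum.inl 1)`
joined by an edge, with end vertices `x₁, …, x_m` (the `Sum.inl` vertices) adjacent to `a`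
and end vertices `y₁, …, y_n` (the `Sum.inr (Sum.inr _)` vertices) adjacent to `b`. -/
def TwoStar (m n : ℕ) : SimpleGraph (Fin m ⊕ Fin 2 ⊕ Fin n) where
  Adj x y :=
    match x, y with
    | Sum.inl _, Sum.inr (Sum.inl a) => a = 0
    | Sum.inr (Sum.inl a), Sum.inl _ => a = 0
    | Sum.inr (Sum.inl a), Sum.inr (Sum.inl b) => a ≠ b
    | Sum.inr (Sum.inl a), Sum.inr (Sum.inr _) => a = 1
    | Sum.inr (Sum.inr _), Sum.inr (Sum.inl a) => a = 1
    | _, _ => False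
  symm := by
    constructor
    rintro (i | (i | i)) (j | (j | j)) h
    · exact h.elim
    · exact h
    · exact h.elim
    · exact h
    · exact h.symm
    · exact h
    · exact h.elim
    · exact h
    · exact h.elim
  loopless := by
    constructor
    rintro (i | (i | i)) h
    · exact h
    · exact h rfl
    · exact h

/-! Pick leaves `x` of the centre `a` and `y` of the centre `b`. They are distinct and not
adjacent, so `x * y ≠ 0`, and `x * y` annihilates both `a` and `b`; since `a` and `b` are
idempotent and nonzero, `x * y` is neither of them. Hence `x * y` would be a common neighbour
of the two centres, and a two-star graph has none. -/

section Boolean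

variable {S : Type u} [CommSemigroupWithZero S]

protected theorem CommSemigroupWithZero.mul_zero (a : S) : a * 0 = 0 := by
  rw [mul_comm]
  exact CommSemigroupWithZero.zero_mul' a

theorem IsIdempotentElem.ne_of_mul_eq_zero {z w : S} (hw : IsIdempotentElem w) (hw0 : w ≠ 0)
    (hzw : z * w = 0) : z ≠ w := by
  rintro rfl
  exact hw0 (hw.symm.trans hzw)

theorem zdvGraph.exists_adj_adj_of_isIdempotentElem
    {x y a b : {x : S // x ≠ 0 ∧ ∃ y : S, y ≠ 0 ∧ x * y = 0}}
    (ha : IsIdempotentElem (a : S)) (hb : IsIdempotentElem (b : S)) (hxy : x ≠ y)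
    (hnxy : ¬ (zdvGraph S).Adj x y) (hxa : (zdvGraph S).Adj x a) (hyb : (zdvGraph S).Adj y b) :
    ∃ c, (zdvGraph S).Adj c a ∧ (zdvGraph S).Adj c b := by
  have hxy0 : (x : S) * y ≠ 0 := fun h => hnxy ⟨hxy, h⟩
  have hca : (x : S) * y * a = 0 := by rw [mul_right_comm, hxa.2, CommSemigroupWithZero.zero_mul']
  have hcb : (x : S) * y * b = 0 := by rw [mul_assoc, hyb.2, CommSemigroupWithZero.mul_zero]
  let c : {x : S // x ≠ 0 ∧ ∃ y : S, y ≠ 0 ∧ x * y = 0} := ⟨x * y, hxy0, a, a.2.1, hca⟩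
  refine ⟨c, ⟨fun h => ?_, hca⟩, ⟨fun h => ?_, hcb⟩⟩
  · exact ha.ne_of_mul_eq_zero a.2.1 hca (congrArg Subtype.val h)
  · exact hb.ne_of_mul_eq_zero b.2.1 hcb (congrArg Subtype.val h)

end Boolean

namespace TwoStar

variable {m n : ℕ}

theorem not_adj_inl_inr_inr (i : Fin m) (j : Fin n) :
    ¬ (TwoStar m n).Adj (Sum.inl i) (Sum.inr (Sum.inr j)) :=
  id

theorem not_adj_one_of_adj_zero {v : Fin m ⊕ Fin 2 ⊕ Fin n}
    (ha : (TwoStar m n).Adj v (Sum.inr (Sum.inl 0))) :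
    ¬ (TwoStar m n).Adj v (Sum.inr (Sum.inl 1)) := by
  rcases v with i | w | j
  · exact (by decide : (1 : Fin 2) ≠ 0)
  · fin_cases w
    · exact absurd rfl ha
    · exact fun h => h rfl
  · exact fun _ => (by decide : (0 : Fin 2) ≠ 1) ha

end TwoStar

theorem stmt17 (m n : ℕ) (hm : 1 ≤ m) (hn : 1 ≤ n) :
    ¬ ∃ (S : Type u) (inst : CommSemigroupWithZero S),
        (∀ x : S, x * x = x) ∧ Nonempty ((@zdvGraph S inst) ≃g TwoStar m n) := by
  rintro ⟨S, inst, hB, ⟨f⟩⟩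
  let x : Fin m ⊕ Fin 2 ⊕ Fin n := Sum.inl ⟨0, hm⟩
  let y : Fin m ⊕ Fin 2 ⊕ Fin n := Sum.inr (Sum.inr ⟨0, hn⟩)
  obtain ⟨c, hca, hcb⟩ := zdvGraph.exists_adj_adj_of_isIdempotentElem (hB _) (hB _)
    (f.symm.injective.ne (by simp))
    (f.symm.map_adj_iff.not.mpr (TwoStar.not_adj_inl_inr_inr _ _))
    (f.symm.map_adj_iff.mpr (show (TwoStar m n).Adj x (Sum.inr (Sum.inl 0)) from rfl))
    (f.symm.map_adj_iff.mpr (show (TwoStar m n).Adj y (Sum.inr (Sum.inl 1)) from rfl))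
  refine TwoStar.not_adj_one_of_adj_zero (v := f c) ?_ ?_
  · simpa using f.map_adj_iff.mpr hca
  · simpa using f.map_adj_iff.mpr hcb
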